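/- Let $V \in C^2(\mathbb{R}^d)$ with $e^{-V}$ integrable, and suppose $|\nabla^2 V| \leq K(1+|\nabla V|^\alpha)$ for some $K < \infty$ and $\alpha \in [1,2)$. Then $|\nabla V| \in L^p(\mu_V)$ for every $1 \leq p < \infty$, where $\mu_V = Z^{-1}e^{-V}\,dx$ is the normalized probability measure. Consequently $|\nabla^2 V| \in L^p(\mu_V)$ for every $1 \leq p < \infty$ as well. -/

import Mathlib

/-!
Where `h = ‖∇V x‖ ≥ 1`, the Hessian bound keeps `∇V` within `h / 4` of `∇V x` on a ball of radius
`T ≍ h ^ (1 - α)` around `x` (a continuity argument: `‖∇²V‖ ≲ h ^ α` as long as this holds).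
Hence `V ≤ V x - c h ^ (2 - α)` on a ball of radius `T / 4` inside `closedBall x 1`, which gives
`h ^ q e^{-V x} ≲ h ^ (q + (α - 1) d) e^{-c h ^ (2 - α)} ∫_{closedBall x 1} e^{-V}`. As `α < 2` the
prefactor is bounded, and `x ↦ ∫_{closedBall x 1} e^{-V}` is integrable (a convolution), so
`‖∇V‖ ^ q e^{-V}` is integrable for every `q ≥ 0`. The Hessian bound carries this over to `∇²V`.
-/

open MeasureTheory Real Metric Set Filter Topology

section Calculus

variable {E F : Type*} [NormedAddCommGroup E] [NormedSpace ℝ E]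
  [NormedAddCommGroup F] [NormedSpace ℝ F]

theorem norm_sub_le_of_norm_fderiv_le_of_norm_sub_le {g : E → F} (hg : Differentiable ℝ g)
    {x y : E} {ε M : ℝ} (hε : 0 ≤ ε)
    (hM : ∀ z, ‖g z - g x‖ ≤ ε → ‖fderiv ℝ g z‖ ≤ M) (hxy : M * ‖y - x‖ < ε) :
    ‖g y - g x‖ ≤ ε := by
  set f : ℝ → F := fun s => g (x + s • (y - x)) - g x
  have hf : ∀ s, HasDerivAt f (fderiv ℝ g (x + s • (y - x)) (y - x)) s := fun s => by
    have hline : HasDerivAt (fun s : ℝ => x + s • (y - x)) (y - x) s := by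
      simpa using ((hasDerivAt_id s).smul_const (y - x)).const_add x
    exact ((hg _).hasFDerivAt.comp_hasDerivAt s hline).sub_const (g x)
  -- `‖f s‖` never reaches the barrier `ε s`, whose slope `ε` beats `‖f' s‖ ≤ M ‖y - x‖`
  have key := image_norm_le_of_norm_deriv_right_lt_deriv_boundary' (a := 0) (b := 1) (f := f)
    (B := fun s => ε * s) (B' := fun _ => ε)
    (fun s _ => (hf s).continuousAt.continuousWithinAt) (fun s _ => (hf s).hasDerivWithinAt)
    (by simp [f]) (continuous_const_mul ε).continuousOn
    (fun s _ => by simpa using ((hasDerivAt_id s).const_mul ε).hasDerivWithinAt)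
    (fun s hs hfs => by
      have hnear : ‖f s‖ ≤ ε := by rw [hfs]; nlinarith [hs.1, hs.2]
      calc ‖fderiv ℝ g (x + s • (y - x)) (y - x)‖
          ≤ ‖fderiv ℝ g (x + s • (y - x))‖ * ‖y - x‖ := ContinuousLinearMap.le_opNorm _ _
        _ ≤ M * ‖y - x‖ := by gcongr; exact hM _ hnear
        _ < ε := hxy)
    (right_mem_Icc.2 zero_le_one)
  simpa [f] using key

end Calculus

section InnerProduct

variable {E : Type*} [NormedAddCommGroup E] [InnerProductSpace ℝ E] [CompleteSpace E]

theorem ContinuousLinearMap.exists_norm_le_one_apply_eq_norm (φ : E →L[ℝ] ℝ) :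
    ∃ u : E, ‖u‖ ≤ 1 ∧ φ u = ‖φ‖ := by
  set v := (InnerProductSpace.toDual ℝ E).symm φ
  have hv : ‖v‖ = ‖φ‖ := LinearIsometryEquiv.norm_map _ _
  refine ⟨‖v‖⁻¹ • v, ?_, ?_⟩
  · rw [norm_smul, norm_inv, norm_norm]
    exact inv_mul_le_one
  · rw [map_smul, smul_eq_mul, ← InnerProductSpace.toDual_symm_apply, real_inner_self_eq_norm_sq,
      ← hv, inv_mul_eq_div, sq, mul_self_div_self]

theorem exists_closedBall_le_sub_of_norm_fderiv_sub_le {V : E → ℝ} (hV : Differentiable ℝ V)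
    {x : E} {T : ℝ} (hT : 0 ≤ T)
    (hD : ∀ y ∈ closedBall x T, ‖fderiv ℝ V y - fderiv ℝ V x‖ ≤ ‖fderiv ℝ V x‖ / 4) :
    ∃ z, closedBall z (T / 4) ⊆ closedBall x T ∧
      ∀ y ∈ closedBall z (T / 4), V y ≤ V x - ‖fderiv ℝ V x‖ * T / 4 := by
  set φ := fderiv ℝ V x
  obtain ⟨u, hu, hφu⟩ := φ.exists_norm_le_one_apply_eq_norm
  set z := x - (3 * T / 4) • u
  have hzx : dist z x ≤ 3 * T / 4 := by
    rw [dist_eq_norm, sub_sub_cancel_left, norm_neg, norm_smul, Real.norm_of_nonneg (by positivity)]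
    nlinarith
  have hsub : closedBall z (T / 4) ⊆ closedBall x T := fun y hy => by
    rw [mem_closedBall] at hy ⊢
    linarith [dist_triangle y z x]
  refine ⟨z, hsub, fun y hy => ?_⟩
  -- `z` lies `3T/4` downhill from `x`: there `φ (y - x) ≤ -‖φ‖ T / 2`, while the mean value
  -- inequality bounds `V y - V x - φ (y - x)` by `‖φ‖ T / 4`
  have hmv := (convex_closedBall x T).norm_image_sub_le_of_norm_fderiv_le' (fun w _ => hV w)
    hD (mem_closedBall_self hT) (hsub hy)
  have hφ : φ (y - x) ≤ ‖φ‖ * (T / 4) - 3 * T / 4 * ‖φ‖ := by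
    have h1 : φ (y - z) ≤ ‖φ‖ * (T / 4) :=
      (le_abs_self _).trans ((φ.le_opNorm _).trans (by gcongr; rwa [← dist_eq_norm]))
    have h2 : φ (y - x) = φ (y - z) - 3 * T / 4 * ‖φ‖ := by
      rw [show y - x = (y - z) - (3 * T / 4) • u by simp [z]; abel, map_sub, map_smul, hφu,
        smul_eq_mul]
    linarith
  have hyx : ‖y - x‖ ≤ T := by rw [← dist_eq_norm]; exact hsub hy
  have hmv' := (le_abs_self _).trans (Real.norm_eq_abs _ ▸ hmv)
  nlinarith [norm_nonneg φ]

end InnerProduct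

theorem tendsto_rpow_mul_exp_neg_mul_rpow_atTop_nhds_zero (γ : ℝ) {c β : ℝ} (hc : 0 < c)
    (hβ : 0 < β) : Tendsto (fun t => t ^ γ * exp (-(c * t ^ β))) atTop (𝓝 0) := by
  refine ((tendsto_rpow_mul_exp_neg_mul_atTop_nhds_zero (γ / β) c hc).comp
    (tendsto_rpow_atTop hβ)).congr' ?_
  filter_upwards [eventually_gt_atTop 0] with t ht
  simp [← rpow_mul ht.le, mul_div_cancel₀ γ hβ.ne', neg_mul]

theorem Real.one_add_rpow_le {t : ℝ} (p : ℝ) (ht : 0 ≤ t) (hp : 0 ≤ p) :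
    (1 + t) ^ p ≤ 2 ^ p * (1 + t ^ p) := by
  have htp : 0 ≤ t ^ p := rpow_nonneg ht p
  rcases le_total t 1 with h | h
  · calc (1 + t) ^ p ≤ 2 ^ p := by gcongr; linarith
      _ ≤ 2 ^ p * (1 + t ^ p) := le_mul_of_one_le_right (by positivity) (by linarith)
  · calc (1 + t) ^ p ≤ (2 * t) ^ p := by gcongr; linarith
      _ = 2 ^ p * t ^ p := mul_rpow zero_le_two ht
      _ ≤ 2 ^ p * (1 + t ^ p) := by gcongr; linarith

theorem MeasureTheory.integrable_withDensity_ofReal_iff {X : Type*} [MeasurableSpace X]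
    {μ : Measure X} {ρ : X → ℝ} (hρ : Measurable ρ) (hρ0 : ∀ x, 0 ≤ ρ x) {f : X → ℝ} :
    Integrable f (μ.withDensity fun x => ENNReal.ofReal (ρ x)) ↔
      Integrable (fun x => f x * ρ x) μ := by
  rw [integrable_withDensity_iff hρ.ennreal_ofReal (.of_forall fun _ => ENNReal.ofReal_lt_top)]
  simp only [ENNReal.toReal_ofReal (hρ0 _)]

theorem MeasureTheory.Integrable.rpow_of_le_mul_one_add {X : Type*} [MeasurableSpace X]
    {μ : Measure X} [IsFiniteMeasure μ] {a b : X → ℝ} {K p : ℝ}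
    (hbp : Integrable (fun x => b x ^ p) μ) (ha : AEStronglyMeasurable a μ)
    (ha0 : ∀ x, 0 ≤ a x) (hb0 : ∀ x, 0 ≤ b x) (hab : ∀ x, a x ≤ K * (1 + b x)) (hp : 0 ≤ p) :
    Integrable (fun x => a x ^ p) μ := by
  refine (((integrable_const 1).add hbp).const_mul ((2 * K) ^ p)).mono'
    (ha.aemeasurable.pow_const p).aestronglyMeasurable (.of_forall fun x => ?_)
  have hK : 0 ≤ K := nonneg_of_mul_nonneg_left ((ha0 x).trans (hab x)) (by linarith [hb0 x])
  rw [Real.norm_of_nonneg (rpow_nonneg (ha0 x) p)]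
  calc a x ^ p ≤ (K * (1 + b x)) ^ p := rpow_le_rpow (ha0 x) (hab x) hp
    _ = K ^ p * (1 + b x) ^ p := mul_rpow hK (by linarith [hb0 x])
    _ ≤ K ^ p * (2 ^ p * (1 + b x ^ p)) := by gcongr; exact one_add_rpow_le p (hb0 x) hp
    _ = (2 * K) ^ p * (1 + b x ^ p) := by rw [mul_rpow zero_le_two hK]; ring

section Averages

variable {E : Type*} [NormedAddCommGroup E] [NormedSpace ℝ E] [FiniteDimensional ℝ E]
  [MeasurableSpace E] [BorelSpace E] {μ : Measure E} [μ.IsAddHaarMeasure]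

theorem MeasureTheory.Integrable.integrable_setIntegral_closedBall {f : E → ℝ}
    (hf : Integrable f μ) (r : ℝ) : Integrable (fun x => ∫ y in closedBall x r, f y ∂μ) μ := by
  have hind : Integrable ((closedBall (0 : E) r).indicator fun _ => (1 : ℝ)) μ :=
    (integrable_indicator_iff measurableSet_closedBall).2
      (integrableOn_const measure_closedBall_lt_top.ne)
  -- the ball integral is the convolution of `f` with the indicator of `closedBall 0 r`
  convert hf.integrable_convolution (ContinuousLinearMap.lsmul ℝ ℝ) hind using 1
  ext x
  rw [convolution_def, ← integral_indicator measurableSet_closedBall]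
  congr 1
  ext y
  have hmem : x - y ∈ closedBall (0 : E) r ↔ y ∈ closedBall x r := by
    rw [mem_closedBall_zero_iff, mem_closedBall, dist_eq_norm, norm_sub_rev]
  by_cases hy : y ∈ closedBall x r
  · simp [hy, hmem.2 hy]
  · simp [hy, mt hmem.1 hy]

end Averages

section GradientControl

variable {E : Type*} [NormedAddCommGroup E] [NormedSpace ℝ E] {V : E → ℝ} {K α : ℝ}

theorem norm_fderiv_sub_le_of_mem_closedBall (hV : ContDiff ℝ 2 V) (hK : 0 < K)
    (hα0 : 0 ≤ α) (hα2 : α ≤ 2)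
    (hH : ∀ x, ‖fderiv ℝ (fderiv ℝ V) x‖ ≤ K * (1 + ‖fderiv ℝ V x‖ ^ α))
    {x : E} (hx : 1 ≤ ‖fderiv ℝ V x‖) :
    ∀ y ∈ closedBall x (‖fderiv ℝ V x‖ ^ (1 - α) / (16 * K)),
      ‖fderiv ℝ V y - fderiv ℝ V x‖ ≤ ‖fderiv ℝ V x‖ / 4 := by
  set h := ‖fderiv ℝ V x‖
  have hh : 0 < h := one_pos.trans_le hx
  have hhα : 1 ≤ h ^ α := one_le_rpow hx hα0
  intro y hy
  refine norm_sub_le_of_norm_fderiv_le_of_norm_sub_le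
    ((hV.fderiv_right le_rfl).differentiable one_ne_zero) (by positivity) (M := 3 * K * h ^ α)
    (fun z hz => ?_) ?_
  · have hz' : ‖fderiv ℝ V z‖ ≤ 5 / 4 * h := by
      linarith [norm_le_insert' (fderiv ℝ V z) (fderiv ℝ V x)]
    have h54 : (5 / 4 * h) ^ α ≤ 2 * h ^ α := by
      rw [mul_rpow (by norm_num) hh.le]
      gcongr
      calc (5 / 4 : ℝ) ^ α ≤ (5 / 4) ^ (2 : ℝ) := rpow_le_rpow_of_exponent_le (by norm_num) hα2
        _ ≤ 2 := by norm_num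
    calc ‖fderiv ℝ (fderiv ℝ V) z‖ ≤ K * (1 + ‖fderiv ℝ V z‖ ^ α) := hH z
      _ ≤ K * (1 + (5 / 4 * h) ^ α) := by gcongr
      _ ≤ 3 * K * h ^ α := by nlinarith
  · have hT : h ^ α * h ^ (1 - α) = h := by rw [← rpow_add hh]; simp
    calc 3 * K * h ^ α * ‖y - x‖ ≤ 3 * K * h ^ α * (h ^ (1 - α) / (16 * K)) := by
          gcongr; rwa [← dist_eq_norm]
      _ = 3 / 16 * (h ^ α * h ^ (1 - α)) := by field_simp
      _ < h / 4 := by rw [hT]; linarith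

end GradientControl

section Potential

variable {E : Type*} [NormedAddCommGroup E] [InnerProductSpace ℝ E] [FiniteDimensional ℝ E]
  {V : E → ℝ} {K α : ℝ}

theorem exists_closedBall_le_sub_rpow_norm_fderiv (hV : ContDiff ℝ 2 V) (hK : 1 ≤ K)
    (hα1 : 1 ≤ α) (hα2 : α ≤ 2)
    (hH : ∀ x, ‖fderiv ℝ (fderiv ℝ V) x‖ ≤ K * (1 + ‖fderiv ℝ V x‖ ^ α))
    {x : E} (hx : 1 ≤ ‖fderiv ℝ V x‖) :
    ∃ z, closedBall z (‖fderiv ℝ V x‖ ^ (1 - α) / (64 * K)) ⊆ closedBall x 1 ∧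
      ∀ y ∈ closedBall z (‖fderiv ℝ V x‖ ^ (1 - α) / (64 * K)),
        V y ≤ V x - ‖fderiv ℝ V x‖ ^ (2 - α) / (64 * K) := by
  set h := ‖fderiv ℝ V x‖
  have hh : 0 < h := one_pos.trans_le hx
  set T := h ^ (1 - α) / (16 * K)
  have hT1 : T ≤ 1 := by
    rw [div_le_one (by positivity)]
    linarith [rpow_le_one_of_one_le_of_nonpos hx (by linarith : 1 - α ≤ 0)]
  obtain ⟨z, hsub, hdesc⟩ := exists_closedBall_le_sub_of_norm_fderiv_sub_le
    (hV.differentiable two_ne_zero) (by positivity)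
    (norm_fderiv_sub_le_of_mem_closedBall hV (by linarith) (by linarith) hα2 hH hx)
  have hr : h ^ (1 - α) / (64 * K) = T / 4 := by ring
  have hc : h ^ (2 - α) / (64 * K) = h * T / 4 := by
    rw [show 2 - α = 1 + (1 - α) by ring, rpow_add hh, rpow_one]; ring
  rw [hr, hc]
  exact ⟨z, hsub.trans (closedBall_subset_closedBall hT1), hdesc⟩

variable [MeasurableSpace E] [BorelSpace E]

theorem exists_rpow_norm_fderiv_mul_exp_neg_le (hV : ContDiff ℝ 2 V) (hK : 1 ≤ K)
    (hα1 : 1 ≤ α) (hα2 : α < 2)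
    (hH : ∀ x, ‖fderiv ℝ (fderiv ℝ V) x‖ ≤ K * (1 + ‖fderiv ℝ V x‖ ^ α))
    (μ : Measure E) [μ.IsAddHaarMeasure] {q : ℝ} (hq : 0 ≤ q) :
    ∃ C, ∀ x, ‖fderiv ℝ V x‖ ^ q * exp (-V x) ≤
      C * (exp (-V x) + ∫ y in closedBall x 1, exp (-V y) ∂μ) := by
  set d := Module.finrank ℝ E
  -- the exponent `γ` absorbs the volume `≍ h ^ ((1 - α) d)` of the ball on which `V` drops
  set γ := q + (α - 1) * d with hγ
  set v := μ.real (closedBall 0 1)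
  have hv : 0 < v := ENNReal.toReal_pos (measure_closedBall_pos μ 0 one_pos).ne'
    measure_closedBall_lt_top.ne
  obtain ⟨R, hR⟩ := ((tendsto_rpow_mul_exp_neg_mul_rpow_atTop_nhds_zero γ
    (by positivity : 0 < 1 / (64 * K)) (by linarith : 0 < 2 - α)).eventually
      (eventually_le_nhds zero_lt_one)).exists_forall_of_atTop
  refine ⟨max (max R 1 ^ q) ((64 * K) ^ d / v), fun x => ?_⟩
  set h := ‖fderiv ℝ V x‖
  have hI : 0 ≤ ∫ y in closedBall x 1, exp (-V y) ∂μ := by positivity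
  rcases lt_or_ge h (max R 1) with hsmall | hbig
  · calc h ^ q * exp (-V x) ≤ max R 1 ^ q * exp (-V x) := by gcongr
      _ ≤ _ := by
        gcongr
        · exact le_max_left _ _
        · linarith
  have hx1 : 1 ≤ h := (le_max_right _ _).trans hbig
  have hh : 0 < h := one_pos.trans_le hx1
  obtain ⟨z, hsub, hdesc⟩ := exists_closedBall_le_sub_rpow_norm_fderiv hV hK hα1 hα2.le hH hx1
  set r := h ^ (1 - α) / (64 * K)
  set c := h ^ (2 - α) / (64 * K)
  have hcont : Continuous fun y => exp (-V y) := by fun_prop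
  have hlower : exp (c - V x) * (r ^ d * v) ≤ ∫ y in closedBall x 1, exp (-V y) ∂μ :=
    calc exp (c - V x) * (r ^ d * v) = exp (c - V x) * μ.real (closedBall z r) := by
          rw [Measure.addHaar_real_closedBall' μ z (by positivity)]
      _ ≤ ∫ y in closedBall z r, exp (-V y) ∂μ :=
          setIntegral_ge_of_const_le_real measurableSet_closedBall measure_closedBall_lt_top.ne
            (fun y hy => exp_le_exp.2 (by linarith [hdesc y hy]))
            (hcont.continuousOn.integrableOn_compact (isCompact_closedBall z r))
      _ ≤ ∫ y in closedBall x 1, exp (-V y) ∂μ :=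
          setIntegral_mono_set (hcont.continuousOn.integrableOn_compact (isCompact_closedBall x 1))
            (.of_forall fun y => (exp_pos _).le) hsub.eventuallyLE
  have hpow : h ^ q = h ^ γ * (r ^ d * (64 * K) ^ d) := by
    rw [← mul_pow, div_mul_cancel₀ _ (by positivity), ← rpow_natCast, ← rpow_mul hh.le,
      ← rpow_add hh, hγ]
    ring_nf
  have htail : h ^ γ * exp (-(1 / (64 * K) * h ^ (2 - α))) ≤ 1 :=
    hR h ((le_max_left _ _).trans hbig)
  calc h ^ q * exp (-V x)
      = h ^ γ * exp (-(1 / (64 * K) * h ^ (2 - α))) * ((64 * K) ^ d / v)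
          * (exp (c - V x) * (r ^ d * v)) := by
        rw [hpow, show -V x = -(1 / (64 * K) * h ^ (2 - α)) + (c - V x) by ring, exp_add]
        field_simp
    _ ≤ 1 * ((64 * K) ^ d / v) * ∫ y in closedBall x 1, exp (-V y) ∂μ := by gcongr
    _ ≤ _ := by
        rw [one_mul]
        gcongr
        · exact le_max_right _ _
        · linarith [exp_pos (-V x)]

theorem integrable_rpow_norm_fderiv_mul_exp_neg (hV : ContDiff ℝ 2 V) (hK : 1 ≤ K)
    (hα1 : 1 ≤ α) (hα2 : α < 2)
    (hH : ∀ x, ‖fderiv ℝ (fderiv ℝ V) x‖ ≤ K * (1 + ‖fderiv ℝ V x‖ ^ α))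
    {μ : Measure E} [μ.IsAddHaarMeasure] (hint : Integrable (fun x => exp (-V x)) μ)
    {q : ℝ} (hq : 0 ≤ q) : Integrable (fun x => ‖fderiv ℝ V x‖ ^ q * exp (-V x)) μ := by
  obtain ⟨C, hC⟩ := exists_rpow_norm_fderiv_mul_exp_neg_le hV hK hα1 hα2 hH μ hq
  have hcont : Continuous fun x => ‖fderiv ℝ V x‖ ^ q * exp (-V x) :=
    ((hV.continuous_fderiv two_ne_zero).norm.rpow_const fun _ => .inr hq).mul (by fun_prop)
  refine ((hint.add (hint.integrable_setIntegral_closedBall 1)).const_mul C).mono'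
    hcont.aestronglyMeasurable (.of_forall fun x => ?_)
  rw [Real.norm_of_nonneg (by positivity)]
  exact hC x

end Potential

theorem gradV_in_all_Lp (d : ℕ) (V : EuclideanSpace ℝ (Fin d) → ℝ)
    (hV : ContDiff ℝ 2 V)
    (hint : Integrable (fun x => Real.exp (-V x)))
    (K α : ℝ) (hα1 : 1 ≤ α) (hα2 : α < 2)
    (hHess : ∀ x, ‖iteratedFDeriv ℝ 2 V x‖ ≤ K * (1 + ‖gradient V x‖ ^ α)) :
    ∀ p : ℝ, 1 ≤ p →
      Integrable (fun x => ‖gradient V x‖ ^ p)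
        ((volume : Measure (EuclideanSpace ℝ (Fin d))).withDensity
          fun x => ENNReal.ofReal ((∫ y, Real.exp (-V y))⁻¹ * Real.exp (-V x)))
      ∧ Integrable (fun x => ‖iteratedFDeriv ℝ 2 V x‖ ^ p)
        ((volume : Measure (EuclideanSpace ℝ (Fin d))).withDensity
          fun x => ENNReal.ofReal ((∫ y, Real.exp (-V y))⁻¹ * Real.exp (-V x))) := by
  set μV := (volume : Measure (EuclideanSpace ℝ (Fin d))).withDensity
    fun x => ENNReal.ofReal ((∫ y, Real.exp (-V y))⁻¹ * Real.exp (-V x))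
  have hHess' : ∀ x, ‖iteratedFDeriv ℝ 2 V x‖ ≤ max K 1 * (1 + ‖gradient V x‖ ^ α) := fun x =>
    (hHess x).trans (by gcongr; exact le_max_left _ _)
  have hgrad_norm : ∀ x, ‖gradient V x‖ = ‖fderiv ℝ V x‖ := fun x =>
    LinearIsometryEquiv.norm_map _ _
  have hH : ∀ x, ‖fderiv ℝ (fderiv ℝ V) x‖ ≤ max K 1 * (1 + ‖fderiv ℝ V x‖ ^ α) := fun x => by
    rw [← norm_iteratedFDeriv_one, norm_iteratedFDeriv_fderiv, ← hgrad_norm]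
    exact hHess' x
  have hgrad : ∀ q : ℝ, 0 ≤ q → Integrable (fun x => ‖gradient V x‖ ^ q) μV := fun q hq => by
    have hVc : Continuous V := hV.continuous
    rw [integrable_withDensity_ofReal_iff (by fun_prop) fun x => by positivity]
    simpa [hgrad_norm, mul_left_comm] using
      (integrable_rpow_norm_fderiv_mul_exp_neg hV (le_max_right K 1) hα1 hα2 hH hint hq).const_mul
        (∫ y, Real.exp (-V y))⁻¹
  have : IsFiniteMeasure μV := isFiniteMeasure_withDensity_ofReal (hint.const_mul _).2
  intro p hp
  refine ⟨hgrad p (by linarith), ?_⟩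
  refine .rpow_of_le_mul_one_add ?_ (hV.continuous_iteratedFDeriv le_rfl).norm.aestronglyMeasurable
    (fun x => norm_nonneg _) (fun x => by positivity) hHess' (by linarith)
  simpa only [← rpow_mul (norm_nonneg _)] using hgrad (α * p) (by positivity)
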